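/- For a tube t of a connected simple graph G with n nodes, the facet of the graph associahedron KG corresponding to t has face poset isomorphic to the product of face posets K(G(t)) × K(G*(t)), where G(t) is the induced subgraph on t and G*(t) is the reconnected complement. -/

import Mathlib

variable {V : Type*}

/-- A tube of a graph: a nonempty proper subset of vertices inducing a connected subgraph. -/
def IsTube (G : SimpleGraph V) (s : Set V) : Prop :=
  s.Nonempty ∧ s ≠ Set.univ ∧ (G.induce s).Connected

/-- Two tubes are compatible if they are nested or far apart (their union is not connected). -/
def TubeCompatible (G : SimpleGraph V) (s t : Set V) : Prop :=
  s ⊆ t ∨ t ⊆ s ∨ ¬(G.induce (s ∪ t)).Connected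

/-- A tubing of `G`: a set of pairwise compatible tubes. -/
def Tubing (G : SimpleGraph V) : Type _ :=
  {T : Set (Set V) // (∀ s ∈ T, IsTube G s) ∧ ∀ s ∈ T, ∀ t ∈ T, TubeCompatible G s t}

/-- The face poset of the graph associahedron `KG`: tubings ordered by reverse inclusion. -/
instance (G : SimpleGraph V) : PartialOrder (Tubing G) where
  le T U := U.1 ⊆ T.1
  le_refl T := subset_rfl
  le_trans a b c h1 h2 := fun x hx => h1 (h2 hx)
  le_antisymm a b h1 h2 := Subtype.ext (subset_antisymm h2 h1)

/-- The reconnected complement `G*(t)`: vertex set `V − t`, with `a ∼ b` iff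
`{a,b} ∪ t'` is connected in `G` for some `t' ⊆ t`. -/
def reconComp (G : SimpleGraph V) (t : Set V) : SimpleGraph ↥(tᶜ) :=
  SimpleGraph.fromRel fun a b =>
    ∃ t' ⊆ t, (G.induce ({a.1, b.1} ∪ t')).Connected

/-!
A tube `s ≠ t` compatible with `t` lies inside `t`, contains `t`, or is far from `t`. The tubes
inside `t` are exactly the tubes of `G(t)`. For the other two kinds, `s ↦ s \ t` is a bijection
onto the tubes of `G*(t)`, inverted by lifting a tube `B` of `G*(t)` to `B ∪ t` if some vertex of
`B` is adjacent to `t`, and to `B` otherwise. A set is connected in `G*(t)` exactly when its lift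
is connected in `G` (a path of `G` is cut into pieces outside `t` joined by detours through `t`,
which are edges of `G*(t)`), and lifting commutes with unions and inclusions, so compatibility
is preserved in both directions; tubes inside `t` are compatible with every lifted tube. Hence a
tubing containing `t` is the same as a pair of tubings of `G(t)` and `G*(t)`, and both directions
preserve inclusion.
-/

open Set

namespace SimpleGraph

variable {G : SimpleGraph V} {s u : Set V}

def ReachIn (G : SimpleGraph V) (s : Set V) : V → V → Prop :=
  Relation.ReflTransGen fun x y => x ∈ s ∧ y ∈ s ∧ G.Adj x y

def HasEdgeBetween (G : SimpleGraph V) (s u : Set V) : Prop :=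
  ∃ x ∈ s, ∃ y ∈ u, G.Adj x y

theorem hasEdgeBetween_union_left {s' : Set V} :
    G.HasEdgeBetween (s ∪ s') u ↔ G.HasEdgeBetween s u ∨ G.HasEdgeBetween s' u := by
  simp only [HasEdgeBetween, mem_union, or_and_right, exists_or]

theorem ReachIn.symm {x y : V} (h : G.ReachIn s x y) : G.ReachIn s y x := by
  induction h with
  | refl => exact .refl
  | tail _ hyz ih => exact .head ⟨hyz.2.1, hyz.1, hyz.2.2.symm⟩ ih

theorem ReachIn.mono (hsu : s ⊆ u) {x y : V} (h : G.ReachIn s x y) : G.ReachIn u x y :=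
  Relation.ReflTransGen.mono (fun _ _ h => ⟨hsu h.1, hsu h.2.1, h.2.2⟩) _ _ h

theorem ReachIn.reachable {x y : V} (h : G.ReachIn s x y) (hx : x ∈ s) (hy : y ∈ s) :
    (G.induce s).Reachable ⟨x, hx⟩ ⟨y, hy⟩ := by
  induction h using Relation.ReflTransGen.head_induction_on with
  | refl => rfl
  | head hxz _ ih =>
    exact (Adj.reachable (G := G.induce s) (u := ⟨_, hxz.1⟩) (v := ⟨_, hxz.2.1⟩) hxz.2.2).trans
      (ih hxz.2.1)

theorem Reachable.reachIn {x y : s} (h : (G.induce s).Reachable x y) : G.ReachIn s x y := by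
  obtain ⟨p⟩ := h
  induction p with
  | nil => exact .refl
  | cons hadj _ ih => exact .head ⟨Subtype.coe_prop _, Subtype.coe_prop _, hadj⟩ ih

theorem induce_connected_iff_reachIn :
    (G.induce s).Connected ↔ s.Nonempty ∧ ∀ x ∈ s, ∀ y ∈ s, G.ReachIn s x y := by
  refine ⟨fun h => ⟨nonempty_coe_sort.1 h.nonempty, fun x hx y hy =>
    (h ⟨x, hx⟩ ⟨y, hy⟩).reachIn⟩, fun ⟨hne, h⟩ => ?_⟩
  have := hne.to_subtype
  exact ⟨fun x y => (h x x.2 y y.2).reachable x.2 y.2⟩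

theorem induce_connected_of_forall_reachIn {z : V} (hz : z ∈ s)
    (h : ∀ x ∈ s, G.ReachIn s x z) : (G.induce s).Connected :=
  induce_connected_iff_reachIn.2 ⟨⟨z, hz⟩, fun x hx y hy => .trans (h x hx) (h y hy).symm⟩

theorem induce_singleton_connected (x : V) : (G.induce {x}).Connected :=
  induce_connected_of_forall_reachIn rfl fun _ hy => hy ▸ .refl

theorem induce_insert_connected (hs : (G.induce s).Connected) {x y : V} (hy : y ∈ s)
    (hxy : G.Adj x y) : (G.induce (insert x s)).Connected := by
  simpa using connected_induce_union (induce_singleton_connected x).preconnected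
    hs.preconnected rfl hy hxy

theorem exists_adj_of_induce_connected (hs : (G.induce s).Connected) {x y : V} (hx : x ∈ s)
    (hy : y ∈ s) (hxy : x ≠ y) : ∃ z ∈ s, G.Adj x z := by
  rcases (induce_connected_iff_reachIn.1 hs).2 x hx y hy |>.cases_head with h | ⟨z, hz, -⟩
  · exact absurd h hxy
  · exact ⟨z, hz.2.1, hz.2.2⟩

theorem hasEdgeBetween_of_induce_union_connected (h : (G.induce (s ∪ u)).Connected)
    (hsu : Disjoint s u) (hs : s.Nonempty) (hu : u.Nonempty) : G.HasEdgeBetween s u := by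
  obtain ⟨x, hx⟩ := hs
  obtain ⟨y, hy⟩ := hu
  obtain ⟨p⟩ := h ⟨x, Or.inl hx⟩ ⟨y, Or.inr hy⟩
  obtain ⟨d, -, hd₁, hd₂⟩ := p.exists_boundary_dart {z | z.1 ∈ s} hx
    (Set.disjoint_left.1 hsu · hy)
  exact ⟨_, hd₁, _, d.snd.2.resolve_left hd₂, d.adj⟩

theorem Connected.hasEdgeBetween_compl (hG : G.Connected) (hs : s.Nonempty)
    (hs' : sᶜ.Nonempty) : G.HasEdgeBetween sᶜ s := by
  obtain ⟨x, hx⟩ := hs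
  obtain ⟨y, hy⟩ := hs'
  obtain ⟨p⟩ := hG y x
  obtain ⟨d, -, hd₁, hd₂⟩ := p.exists_boundary_dart sᶜ hy (not_not.2 hx)
  exact ⟨_, hd₁, _, not_not.1 hd₂, d.adj⟩

end SimpleGraph

open SimpleGraph

section InducedSubgraph

variable {G : SimpleGraph V} {t : Set V}

theorem induce_induce_connected_iff {A : Set ↥t} :
    ((G.induce t).induce A).Connected ↔ (G.induce (Subtype.val '' A)).Connected :=
  Iso.connected_iff
    { toEquiv := Equiv.Set.image Subtype.val A Subtype.val_injective, map_rel_iff' := Iff.rfl }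

theorem isTube_induce_iff (ht : t ≠ univ) {A : Set ↥t} :
    IsTube (G.induce t) A ↔ IsTube G (Subtype.val '' A) ∧ A ≠ univ := by
  have hA : Subtype.val '' A ≠ univ := fun h =>
    ht (eq_univ_of_univ_subset (h ▸ Subtype.coe_image_subset t A))
  simp only [IsTube, image_nonempty, induce_induce_connected_iff, ne_eq, hA, not_false_eq_true,
    true_and]
  tauto

theorem tubeCompatible_induce_iff {A A' : Set ↥t} :
    TubeCompatible (G.induce t) A A' ↔
      TubeCompatible G (Subtype.val '' A) (Subtype.val '' A') := by
  unfold TubeCompatible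
  rw [image_subset_image_iff Subtype.val_injective, image_subset_image_iff Subtype.val_injective,
    induce_induce_connected_iff, image_union]

end InducedSubgraph

section ReconnectedComplement

variable {G : SimpleGraph V} {t : Set V} {B B' : Set ↥tᶜ}

theorem reconComp_adj {a b : ↥tᶜ} :
    (reconComp G t).Adj a b ↔ a ≠ b ∧ ∃ t' ⊆ t, (G.induce ({a.1, b.1} ∪ t')).Connected := by
  simp only [reconComp, fromRel_adj]
  rw [pair_comm b.1, or_self]

theorem reachIn_reconComp_of_induce_connected {S : Set V} (hS : (G.induce S).Connected)
    {a b : ↥tᶜ} (ha : a.1 ∈ S) (hb : b.1 ∈ S) :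
    (reconComp G t).ReachIn (Subtype.val ⁻¹' S) a b := by
  -- walking back from `b`, each vertex `x` lies in a connected set `{c} ∪ u` with `u ⊆ t`,
  -- where `c ∉ t` is already joined to `b` in `G*(t)`
  have key : ∀ x, G.ReachIn S x b → ∃ c : ↥tᶜ, c.1 ∈ S ∧
      (reconComp G t).ReachIn (Subtype.val ⁻¹' S) c b ∧
      ∃ u ⊆ t, x ∈ insert c.1 u ∧ (G.induce (insert c.1 u)).Connected := by
    intro x hx
    induction hx using Relation.ReflTransGen.head_induction_on with
    | refl => exact ⟨b, hb, .refl, ∅, empty_subset _, mem_insert _ _,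
        by rw [insert_empty_eq]; exact induce_singleton_connected _⟩
    | @head x y hxy _ ih =>
      obtain ⟨hxS, -, hadj⟩ := hxy
      obtain ⟨c, hcS, hcb, u, hut, hyu, hconn⟩ := ih
      have hconn' := induce_insert_connected hconn hyu hadj
      by_cases hxt : x ∈ t
      · exact ⟨c, hcS, hcb, insert x u, insert_subset hxt hut, by simp,
          by rwa [insert_comm]⟩
      refine ⟨⟨x, hxt⟩, hxS, ?_, ∅, empty_subset _, mem_insert _ _,
        by rw [insert_empty_eq]; exact induce_singleton_connected _⟩
      by_cases hxc : (⟨x, hxt⟩ : ↥tᶜ) = c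
      · rwa [hxc]
      · refine .head ⟨hxS, hcS, reconComp_adj.2 ⟨hxc, u, hut, ?_⟩⟩ hcb
        rwa [insert_union, singleton_union]
  obtain ⟨c, -, hcb, u, hut, hau, -⟩ := key a ((induce_connected_iff_reachIn.1 hS).2 a ha b hb)
  obtain rfl : a = c := Subtype.ext <| hau.resolve_right fun h => a.2 (hut h)
  exact hcb

open Classical in
noncomputable def reconLift (G : SimpleGraph V) (t : Set V) (B : Set ↥tᶜ) : Set V :=
  if G.HasEdgeBetween (Subtype.val '' B) t then Subtype.val '' B ∪ t else Subtype.val '' B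

theorem reconLift_of_hasEdgeBetween (h : G.HasEdgeBetween (Subtype.val '' B) t) :
    reconLift G t B = Subtype.val '' B ∪ t :=
  if_pos h

theorem reconLift_of_not_hasEdgeBetween (h : ¬G.HasEdgeBetween (Subtype.val '' B) t) :
    reconLift G t B = Subtype.val '' B :=
  if_neg h

theorem image_subset_reconLift : Subtype.val '' B ⊆ reconLift G t B := by
  unfold reconLift
  split_ifs
  exacts [subset_union_left, subset_rfl]

theorem preimage_reconLift : (Subtype.val ⁻¹' reconLift G t B : Set ↥tᶜ) = B := by
  unfold reconLift
  split_ifs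
  · ext x
    simp
  · exact preimage_image_eq B Subtype.val_injective

theorem reconLift_injective : Function.Injective (reconLift G t) := fun B B' h => by
  rw [← preimage_reconLift (G := G) (B := B), h, preimage_reconLift]

theorem reconLift_ne_of_subset (hB : B.Nonempty) {s : Set V} (hs : s ⊆ t) :
    reconLift G t B ≠ s := by
  rintro rfl
  obtain ⟨x, hx⟩ := hB
  exact x.2 (hs (image_subset_reconLift (mem_image_of_mem _ hx)))

theorem reconLift_empty : reconLift G t ∅ = ∅ := by
  simp [reconLift, HasEdgeBetween]

theorem reconLift_union : reconLift G t (B ∪ B') = reconLift G t B ∪ reconLift G t B' := by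
  unfold reconLift
  rw [image_union, hasEdgeBetween_union_left]
  split_ifs <;> ext <;> simp only [mem_union] <;> tauto

theorem reconLift_mono (h : B ⊆ B') : reconLift G t B ⊆ reconLift G t B' := by
  rw [← union_eq_right.2 h, reconLift_union]
  exact subset_union_left

theorem reconLift_subset_reconLift_iff : reconLift G t B ⊆ reconLift G t B' ↔ B ⊆ B' :=
  ⟨fun h => by
    have := preimage_mono (f := (Subtype.val : ↥tᶜ → V)) h
    rwa [preimage_reconLift, preimage_reconLift] at this, reconLift_mono⟩

theorem induce_reconLift_connected (ht : (G.induce t).Connected)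
    (hB : ((reconComp G t).induce B).Connected) : (G.induce (reconLift G t B)).Connected := by
  obtain ⟨⟨a, ha⟩, hBreach⟩ := induce_connected_iff_reachIn.1 hB
  have trace : ∀ s : Set V, (∀ x ∈ B, ∀ y ∈ B, (reconComp G t).Adj x y → G.ReachIn s x y) →
      ∀ x ∈ B, G.ReachIn s x a := fun s h x hx =>
    (hBreach x hx a ha).lift' Subtype.val fun p q hpq => h p hpq.1 q hpq.2.1 hpq.2.2
  by_cases hE : G.HasEdgeBetween (Subtype.val '' B) t
  · rw [reconLift_of_hasEdgeBetween hE]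
    obtain ⟨_, ⟨b, hb, rfl⟩, τ, hτ, hbτ⟩ := hE
    have hreach := trace (Subtype.val '' B ∪ t) fun x hx y hy hxy => by
      obtain ⟨-, t', ht', hconn⟩ := reconComp_adj.1 hxy
      refine ((induce_connected_iff_reachIn.1 hconn).2 x (by simp) y (by simp)).mono ?_
      exact union_subset
        (pair_subset (.inl (mem_image_of_mem _ hx)) (.inl (mem_image_of_mem _ hy)))
        (ht'.trans subset_union_right)
    refine induce_connected_of_forall_reachIn (Or.inr hτ) ?_
    rintro _ (⟨x, hx, rfl⟩ | hz)
    · exact ((hreach x hx).trans (hreach b hb).symm).tail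
        ⟨.inl (mem_image_of_mem _ hb), .inr hτ, hbτ⟩
    · exact ((induce_connected_iff_reachIn.1 ht).2 _ hz τ hτ).mono subset_union_right
  · rw [reconLift_of_not_hasEdgeBetween hE]
    refine induce_connected_of_forall_reachIn (mem_image_of_mem _ ha) ?_
    rintro _ ⟨x, hx, rfl⟩
    refine trace _ (fun x hx y hy hxy =>
      .single ⟨mem_image_of_mem _ hx, mem_image_of_mem _ hy, ?_⟩) x hx
    -- no `G`-neighbour of `x` lies in `t`, so the path through `t'` must leave `x` towards `y`
    obtain ⟨hne, t', ht', hconn⟩ := reconComp_adj.1 hxy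
    obtain ⟨z, hz, hxz⟩ := exists_adj_of_induce_connected hconn (by simp) (by simp)
      (Subtype.coe_ne_coe.2 hne)
    rcases hz with (rfl | rfl) | hz
    · exact (G.irrefl hxz).elim
    · exact hxz
    · exact absurd ⟨_, mem_image_of_mem _ hx, z, ht' hz, hxz⟩ hE

theorem induce_reconComp_connected_iff (ht : (G.induce t).Connected) (hB : B.Nonempty) :
    ((reconComp G t).induce B).Connected ↔ (G.induce (reconLift G t B)).Connected := by
  refine ⟨induce_reconLift_connected ht, fun h => induce_connected_iff_reachIn.2 ⟨hB, ?_⟩⟩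
  intro x hx y hy
  have := reachIn_reconComp_of_induce_connected h (image_subset_reconLift (mem_image_of_mem _ hx))
    (image_subset_reconLift (mem_image_of_mem _ hy))
  rwa [preimage_reconLift] at this

theorem reconLift_univ (hG : G.Connected) (ht : t.Nonempty) (ht' : t ≠ univ) :
    reconLift G t univ = univ := by
  have hE : G.HasEdgeBetween tᶜ t := hG.hasEdgeBetween_compl ht (nonempty_compl.2 ht')
  rw [reconLift_of_hasEdgeBetween (by rwa [image_univ, Subtype.range_coe]), image_univ,
    Subtype.range_coe, compl_union_self]

theorem isTube_reconComp_iff (hG : G.Connected) (ht : IsTube G t) :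
    IsTube (reconComp G t) B ↔ IsTube G (reconLift G t B) := by
  have hne : (reconLift G t B).Nonempty ↔ B.Nonempty := by
    refine ⟨fun h => nonempty_iff_ne_empty.2 ?_, fun h => (h.image _).mono image_subset_reconLift⟩
    rintro rfl
    simp [reconLift_empty] at h
  have huniv : reconLift G t B = univ ↔ B = univ := by
    refine ⟨fun h => ?_, fun h => h ▸ reconLift_univ hG ht.1 ht.2.1⟩
    rw [← preimage_reconLift (G := G) (B := B), h, preimage_univ]
  unfold IsTube
  rw [hne, ne_eq, ne_eq, huniv]
  exact and_congr_right fun hB => and_congr_right fun _ => induce_reconComp_connected_iff ht.2.2 hB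

theorem tubeCompatible_reconComp_iff (ht : (G.induce t).Connected) (hB : B.Nonempty) :
    TubeCompatible (reconComp G t) B B' ↔
      TubeCompatible G (reconLift G t B) (reconLift G t B') := by
  unfold TubeCompatible
  rw [reconLift_subset_reconLift_iff, reconLift_subset_reconLift_iff, ← reconLift_union,
    induce_reconComp_connected_iff ht (hB.mono subset_union_left)]

theorem tubeCompatible_reconLift (hB : B.Nonempty) {s : Set V} (hs : s.Nonempty) (hst : s ⊆ t) :
    TubeCompatible G s (reconLift G t B) := by
  by_cases hE : G.HasEdgeBetween (Subtype.val '' B) t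
  · rw [reconLift_of_hasEdgeBetween hE]
    exact Or.inl (hst.trans subset_union_right)
  · rw [reconLift_of_not_hasEdgeBetween hE]
    refine Or.inr (Or.inr fun h => ?_)
    have hdisj : Disjoint s (Subtype.val '' B) :=
      Set.disjoint_left.2 fun x hxs ⟨y, _, hyx⟩ => y.2 (hyx ▸ hst hxs)
    obtain ⟨x, hx, y, hy, hxy⟩ := hasEdgeBetween_of_induce_union_connected h hdisj hs (hB.image _)
    exact hE ⟨y, hy, x, hst hx, hxy.symm⟩

theorem reconLift_preimage_of_not_subset (ht : (G.induce t).Connected) {s : Set V}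
    (hs : (G.induce s).Connected) (hst : TubeCompatible G s t) (hs' : ¬s ⊆ t) :
    reconLift G t (Subtype.val ⁻¹' s) = s := by
  have himage : Subtype.val '' (Subtype.val ⁻¹' s : Set ↥tᶜ) = s \ t := by
    rw [Subtype.image_preimage_coe, sdiff_eq_compl_inter]
  rcases hst with hst | hts | hfar
  · exact absurd hst hs'
  · have hunion : s \ t ∪ t = s := sdiff_union_of_subset hts
    have hE : G.HasEdgeBetween (s \ t) t :=
      hasEdgeBetween_of_induce_union_connected (by rwa [hunion]) disjoint_sdiff_left
        (sdiff_nonempty.2 hs') (nonempty_coe_sort.1 ht.nonempty)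
    rw [reconLift_of_hasEdgeBetween (by rwa [himage]), himage, hunion]
  · have hdisj : Disjoint s t := Set.disjoint_left.2 fun x hxs hxt =>
      hfar (induce_union_connected hs.preconnected ht.preconnected ⟨x, hxs, hxt⟩)
    have hE : ¬G.HasEdgeBetween s t := fun ⟨x, hxs, y, hyt, hxy⟩ =>
      hfar (connected_induce_union hs.preconnected ht.preconnected hxs hyt hxy)
    rw [hdisj.sdiff_eq_left] at himage
    rw [reconLift_of_not_hasEdgeBetween (by rwa [himage]), himage]

end ReconnectedComplement

def IsTubing (G : SimpleGraph V) (T : Set (Set V)) : Prop :=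
  (∀ s ∈ T, IsTube G s) ∧ ∀ s ∈ T, ∀ u ∈ T, TubeCompatible G s u

theorem TubeCompatible.symm {G : SimpleGraph V} {s u : Set V} (h : TubeCompatible G s u) :
    TubeCompatible G u s := by
  unfold TubeCompatible at *
  rwa [union_comm, ← or_assoc, or_comm (a := u ⊆ s), or_assoc]

section Facet

variable {G : SimpleGraph V} {t : Set V}

def facetInner (t : Set V) (T : Set (Set V)) : Set (Set ↥t) :=
  (Subtype.val '' ·) ⁻¹' T \ {univ}

def facetOuter (G : SimpleGraph V) (t : Set V) (T : Set (Set V)) : Set (Set ↥tᶜ) :=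
  reconLift G t ⁻¹' T \ {∅}

def facetJoin (G : SimpleGraph V) (t : Set V) (T₁ : Set (Set ↥t)) (T₂ : Set (Set ↥tᶜ)) :
    Set (Set V) :=
  insert t ((Subtype.val '' ·) '' T₁ ∪ reconLift G t '' T₂)

theorem isTubing_facetInner (ht : t ≠ univ) {T : Set (Set V)} (hT : IsTubing G T) :
    IsTubing (G.induce t) (facetInner t T) :=
  ⟨fun _ hA => (isTube_induce_iff ht).2 ⟨hT.1 _ hA.1, hA.2⟩,
    fun _ hA _ hA' => tubeCompatible_induce_iff.2 (hT.2 _ hA.1 _ hA'.1)⟩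

theorem isTubing_facetOuter (hG : G.Connected) (ht : IsTube G t) {T : Set (Set V)}
    (hT : IsTubing G T) : IsTubing (reconComp G t) (facetOuter G t T) :=
  ⟨fun _ hB => (isTube_reconComp_iff hG ht).2 (hT.1 _ hB.1),
    fun _ hB _ hB' => (tubeCompatible_reconComp_iff ht.2.2 (nonempty_iff_ne_empty.2 hB.2)).2
      (hT.2 _ hB.1 _ hB'.1)⟩

theorem isTubing_facetJoin (hG : G.Connected) (ht : IsTube G t) {T₁ : Set (Set ↥t)}
    {T₂ : Set (Set ↥tᶜ)} (hT₁ : IsTubing (G.induce t) T₁) (hT₂ : IsTubing (reconComp G t) T₂) :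
    IsTubing G (facetJoin G t T₁ T₂) := by
  constructor
  · rintro s (rfl | ⟨A, hA, rfl⟩ | ⟨B, hB, rfl⟩)
    · exact ht
    · exact ((isTube_induce_iff ht.2.1).1 (hT₁.1 A hA)).1
    · exact (isTube_reconComp_iff hG ht).1 (hT₂.1 B hB)
  have htA {A : Set ↥t} : TubeCompatible G t (Subtype.val '' A) :=
    Or.inr (Or.inl (Subtype.coe_image_subset t A))
  have htB {B : Set ↥tᶜ} (hB : B ∈ T₂) : TubeCompatible G t (reconLift G t B) :=
    tubeCompatible_reconLift (hT₂.1 B hB).1 ht.1 subset_rfl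
  have hAB {A : Set ↥t} {B : Set ↥tᶜ} (hA : A ∈ T₁) (hB : B ∈ T₂) :
      TubeCompatible G (Subtype.val '' A) (reconLift G t B) :=
    tubeCompatible_reconLift (hT₂.1 B hB).1 ((hT₁.1 A hA).1.image _)
      (Subtype.coe_image_subset t A)
  rintro s (rfl | ⟨A, hA, rfl⟩ | ⟨B, hB, rfl⟩) u (rfl | ⟨A', hA', rfl⟩ | ⟨B', hB', rfl⟩)
  · exact Or.inl subset_rfl
  · exact htA
  · exact htB hB'
  · exact htA.symm
  · exact tubeCompatible_induce_iff.1 (hT₁.2 A hA A' hA')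
  · exact hAB hA hB'
  · exact (htB hB).symm
  · exact (hAB hA' hB).symm
  · exact (tubeCompatible_reconComp_iff ht.2.2 (hT₂.1 B hB).1).1 (hT₂.2 B hB B' hB')

theorem facetJoin_facetInner_facetOuter (ht : (G.induce t).Connected) {T : Set (Set V)}
    (hT : IsTubing G T) (htT : t ∈ T) : facetJoin G t (facetInner t T) (facetOuter G t T) = T := by
  refine subset_antisymm (insert_subset htT (union_subset ?_ ?_)) fun s hs => ?_
  · exact (image_preimage_subset _ _).trans' (image_mono sdiff_subset)
  · exact (image_preimage_subset _ _).trans' (image_mono sdiff_subset)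
  by_cases hst : s = t
  · exact hst ▸ mem_insert _ _
  by_cases hsub : s ⊆ t
  · have him : Subtype.val '' (Subtype.val ⁻¹' s : Set ↥t) = s := by
      rw [Subtype.image_preimage_coe, inter_eq_right.2 hsub]
    refine .inr (.inl ⟨_, ⟨by rwa [mem_preimage, him], fun h => hst ?_⟩, him⟩)
    rw [← him, mem_singleton_iff.1 h, image_univ, Subtype.range_coe]
  · have hlift := reconLift_preimage_of_not_subset ht (hT.1 s hs).2.2 (hT.2 s hs t htT) hsub
    refine .inr (.inr ⟨_, ⟨by rwa [mem_preimage, hlift], fun h => ?_⟩, hlift⟩)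
    rw [mem_singleton_iff.1 h, reconLift_empty] at hlift
    exact (hT.1 s hs).1.ne_empty hlift.symm

theorem facetInner_facetJoin {T₁ : Set (Set ↥t)} {T₂ : Set (Set ↥tᶜ)} (hT₁ : univ ∉ T₁)
    (hT₂ : ∀ B ∈ T₂, B.Nonempty) : facetInner t (facetJoin G t T₁ T₂) = T₁ := by
  ext A
  simp only [facetInner, facetJoin, mem_sdiff, mem_preimage, mem_insert_iff, mem_union, mem_image,
    mem_singleton_iff, image_eq_image Subtype.val_injective]
  refine ⟨?_, fun hA => ⟨.inr (.inl ⟨A, hA, rfl⟩), fun h => hT₁ (h ▸ hA)⟩⟩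
  rintro ⟨h | ⟨A', hA', rfl⟩ | ⟨B, hB, h⟩, hA⟩
  · exact absurd (Subtype.val_injective.image_injective (h.trans (Subtype.coe_image_univ t).symm))
      hA
  · exact hA'
  · exact absurd h (reconLift_ne_of_subset (hT₂ B hB) (Subtype.coe_image_subset t A))

theorem facetOuter_facetJoin {T₁ : Set (Set ↥t)} {T₂ : Set (Set ↥tᶜ)}
    (hT₂ : ∀ B ∈ T₂, B.Nonempty) : facetOuter G t (facetJoin G t T₁ T₂) = T₂ := by
  ext B
  simp only [facetOuter, facetJoin, mem_sdiff, mem_preimage, mem_insert_iff, mem_union, mem_image,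
    mem_singleton_iff]
  refine ⟨?_, fun hB => ⟨.inr (.inr ⟨B, hB, rfl⟩), (hT₂ B hB).ne_empty⟩⟩
  rintro ⟨h | ⟨A, -, h⟩ | ⟨B', hB', h⟩, hB⟩
  · exact absurd h (reconLift_ne_of_subset (nonempty_iff_ne_empty.2 hB) subset_rfl)
  · exact absurd h.symm
      (reconLift_ne_of_subset (nonempty_iff_ne_empty.2 hB) (Subtype.coe_image_subset t A))
  · exact reconLift_injective h ▸ hB'

noncomputable def facetEquiv (hG : G.Connected) (ht : IsTube G t) :
    {T : Tubing G // t ∈ T.1} ≃ Tubing (G.induce t) × Tubing (reconComp G t) where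
  toFun T := (⟨facetInner t T.1.1, isTubing_facetInner ht.2.1 T.1.2⟩,
    ⟨facetOuter G t T.1.1, isTubing_facetOuter hG ht T.1.2⟩)
  invFun P := ⟨⟨facetJoin G t P.1.1 P.2.1, isTubing_facetJoin hG ht P.1.2 P.2.2⟩, mem_insert _ _⟩
  left_inv T := Subtype.ext <| Subtype.ext <| facetJoin_facetInner_facetOuter ht.2.2 T.1.2 T.2
  right_inv P := Prod.ext
    (Subtype.ext <| facetInner_facetJoin (fun h => (P.1.2.1 _ h).2.1 rfl)
      fun B hB => (P.2.2.1 B hB).1)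
    (Subtype.ext <| facetOuter_facetJoin fun B hB => (P.2.2.1 B hB).1)

theorem facetEquiv_monotone (hG : G.Connected) (ht : IsTube G t) : Monotone (facetEquiv hG ht) :=
  fun _ _ h =>
    ⟨sdiff_subset_sdiff_left (preimage_mono h), sdiff_subset_sdiff_left (preimage_mono h)⟩

theorem facetEquiv_symm_monotone (hG : G.Connected) (ht : IsTube G t) :
    Monotone (facetEquiv hG ht).symm :=
  fun _ _ h => insert_subset_insert (union_subset_union (image_mono h.1) (image_mono h.2))

end Facet

/-- Carr–Devadoss: for a tube `t` of a connected graph `G`, the facet of the graph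
associahedron `KG` corresponding to `t` (the tubings containing `t`) has face poset
isomorphic to the product of the face posets of `K(G(t))` and `K(G*(t))`. -/
theorem facet_face_poset_iso (G : SimpleGraph V) (hG : G.Connected)
    (t : Set V) (ht : IsTube G t) :
    Nonempty ({T : Tubing G // t ∈ T.1} ≃o
      (Tubing (G.induce t) × Tubing (reconComp G t))) :=
  ⟨(facetEquiv hG ht).toOrderIso (facetEquiv_monotone hG ht) (facetEquiv_symm_monotone hG ht)⟩
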